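/- arXiv:1310.1353 — 3 statements merged into one kernel-verified Lean document; each statement's English description precedes it below -/
import Mathlib

section
/- Let D = ∏_n M_{k(n)}(ℂ), let 𝒥 be an ideal on ℕ, and let D^𝒥 = ⊕_𝒥 M_{k(n)}(ℂ). Then the center of the quotient C*-algebra D/D^𝒥 equals the image of the center Z(D) under the quotient map; that is, Z(D/D^𝒥) ≅ Z(D)/(D^𝒥 ∩ Z(D)). -/
/-!
Averaging `u a u⋆` over the Haar probability measure of the compact unitary group of a
finite-dimensional C⋆-algebra gives an element `c` commuting with every unitary, hence central
because the unitaries span the algebra; and `a - c` is the average of `(a u - u a) u⋆`, so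
`‖a - c‖ ≤ ‖a u - u a‖` for a unitary `u` maximising the right-hand side. Doing this in
every coordinate of `a ∈ ∏ M_{k(n)}` yields a central `c` and one bounded family of unitaries
`u`; if `a` is central modulo `D^𝒥`, then `[a, u] ∈ D^𝒥` and therefore `a - c ∈ D^𝒥`.
Conversely `[a, b] = [a - c, b]` for central `c`.
-/

open scoped ENNReal Matrix.Norms.L2Operator

noncomputable instance (k : ℕ) : NormedStarGroup (Matrix (Fin k) (Fin k) ℂ) :=
  CStarRing.to_normedStarGroup

open MeasureTheory

lemma CStarRing.norm_le_one_of_mem_unitary {E : Type*} [NormedRing E] [StarRing E] [CStarRing E]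
    {u : E} (hu : u ∈ unitary E) : ‖u‖ ≤ 1 := by
  rcases subsingleton_or_nontrivial E with _ | _
  · simp [Subsingleton.elim u 0]
  · exact (norm_of_mem_unitary hu).le

namespace CStarAlgebra

variable {A : Type*} [CStarAlgebra A]

lemma mem_center_of_forall_mem_unitary_commute {x : A}
    (hx : ∀ u ∈ unitary A, u * x = x * u) : x ∈ Set.center A := by
  have hspan : Submodule.span ℂ (unitary A : Set A) ≤
      (Subalgebra.centralizer ℂ {x}).toSubmodule :=
    Submodule.span_le.mpr fun u hu => Set.mem_centralizer_iff.mpr (by simpa using (hx u hu).symm)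
  refine Semigroup.mem_center_iff.mpr fun y => ?_
  have hy := hspan (span_unitary A ▸ Submodule.mem_top (x := y))
  simpa using (Set.mem_centralizer_iff.mp hy x rfl).symm

instance compactSpace_unitary [FiniteDimensional ℂ A] : CompactSpace (unitary A) := by
  have := FiniteDimensional.proper ℂ A
  refine isCompact_iff_compactSpace.mp (Metric.isCompact_of_isClosed_isBounded isClosed_unitary ?_)
  exact (Metric.isBounded_iff_subset_closedBall 0).mpr
    ⟨1, fun u hu => mem_closedBall_zero_iff.mpr (CStarRing.norm_le_one_of_mem_unitary hu)⟩

section average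

variable [MeasurableSpace (unitary A)] (μ : Measure (unitary A))

noncomputable def conjAverage (a : A) : A :=
  ∫ u : unitary A, (u : A) * a * star (u : A) ∂μ

variable {a : A}

lemma conjAverage_mem_center [MeasurableMul (unitary A)] [μ.IsMulLeftInvariant]
    (hintegrable : Integrable (fun u : unitary A => (u : A) * a * star (u : A)) μ) :
    conjAverage μ a ∈ Set.center A := by
  refine mem_center_of_forall_mem_unitary_commute fun v hv => ?_
  lift v to unitary A using hv
  have hconj : v * conjAverage μ a * star (v : A) = conjAverage μ a := by
    calc v * conjAverage μ a * star (v : A)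
        = ∫ u : unitary A, v * ((u : A) * a * star (u : A)) * star (v : A) ∂μ := by
          rw [conjAverage, integral_mul_const_of_integrable (hintegrable.const_mul _),
            integral_const_mul_of_integrable hintegrable]
      _ = ∫ u : unitary A,
            ((v * u : unitary A) : A) * a * star ((v * u : unitary A) : A) ∂μ := by
          simp only [Submonoid.coe_mul, star_mul, mul_assoc]
      _ = conjAverage μ a :=
          integral_mul_left_eq_self (fun u : unitary A => (u : A) * a * star (u : A)) v
  calc v * conjAverage μ a = v * conjAverage μ a * star (v : A) * v := by
        rw [mul_assoc _ (star _), Unitary.star_mul_self_of_mem v.2, mul_one]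
    _ = conjAverage μ a * v := by rw [hconj]

lemma norm_sub_conjAverage_le [IsProbabilityMeasure μ]
    (hintegrable : Integrable (fun u : unitary A => (u : A) * a * star (u : A)) μ) {C : ℝ}
    (hC : ∀ u : unitary A, ‖a * u - u * a‖ ≤ C) :
    ‖a - conjAverage μ a‖ ≤ C := by
  have hsub : a - conjAverage μ a = ∫ u : unitary A, (a * u - u * a) * star (u : A) ∂μ := by
    calc a - conjAverage μ a = ∫ _ : unitary A, a ∂μ - conjAverage μ a := by
          rw [integral_const, probReal_univ, one_smul]
      _ = ∫ u : unitary A, (a - (u : A) * a * star (u : A)) ∂μ :=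
          (integral_sub (integrable_const a) hintegrable).symm
      _ = _ := by
          congr with u
          rw [sub_mul, mul_assoc a, Unitary.mul_star_self_of_mem u.2, mul_one]
  rw [hsub]
  refine (norm_integral_le_of_norm_le_const (Filter.Eventually.of_forall fun u => ?_)).trans_eq
    (by rw [probReal_univ, mul_one])
  rw [CStarRing.norm_mul_mem_unitary _ (Unitary.star_mem u.2)]
  exact hC u

end average

theorem exists_mem_center_norm_sub_le_norm_commutator [FiniteDimensional ℂ A] (a : A) :
    ∃ c ∈ Set.center A, ∃ u ∈ unitary A, ‖a - c‖ ≤ ‖a * u - u * a‖ := by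
  let : MeasurableSpace A := borel A
  have : BorelSpace A := ⟨rfl⟩
  let μ := Measure.haarMeasure (⊤ : TopologicalSpace.PositiveCompacts (unitary A))
  have : IsProbabilityMeasure μ :=
    ⟨by rw [← TopologicalSpace.PositiveCompacts.coe_top]; exact Measure.haarMeasure_self⟩
  have hintegrable : Integrable (fun u : unitary A => (u : A) * a * star (u : A)) μ :=
    Continuous.integrable_of_hasCompactSupport (by fun_prop) (.of_compactSpace _)
  obtain ⟨u, -, hu⟩ := isCompact_univ.exists_isMaxOn Set.univ_nonempty
    (f := fun u : unitary A => ‖a * u - u * a‖) (by fun_prop)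
  exact ⟨_, conjAverage_mem_center μ hintegrable, u, u.2,
    norm_sub_conjAverage_le μ hintegrable fun v => hu (Set.mem_univ v)⟩

end CStarAlgebra

section VanishesAlong

variable {ι : Type*} {E : ι → Type*} [∀ i, Norm (E i)]

/-- For `f ∈ ∏ M_{k(n)}`, `VanishesAlong 𝒥 f` says `f ∈ D^𝒥`. -/
def VanishesAlong (J : Set (Set ι)) (f : ∀ i, E i) : Prop :=
  ∀ ε : ℝ, 0 < ε → {i | ε ≤ ‖f i‖} ∈ J

lemma VanishesAlong.of_norm_le_mul {F : ι → Type*} [∀ i, Norm (F i)] {J : Set (Set ι)}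
    (hJ : IsLowerSet J) {g : ∀ i, F i} (hg : VanishesAlong J g) {f : ∀ i, E i} {C : ℝ}
    (hC : 0 ≤ C) (hfg : ∀ i, ‖f i‖ ≤ C * ‖g i‖) : VanishesAlong J f := by
  intro ε hε
  refine hJ (fun i (hi : ε ≤ ‖f i‖) => ?_) (hg (ε / (C + 1)) (by positivity))
  rw [Set.mem_ofPred_eq, div_le_iff₀ (by positivity)]
  nlinarith [hfg i]

end VanishesAlong

namespace lp

variable {ι : Type*} {B : ι → Type*}

lemma commutator_apply [∀ i, NonUnitalNormedRing (B i)] (a b : lp B ∞) (i : ι) :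
    (a * b - b * a) i = a i * b i - b i * a i := by
  simp only [lp.coeFn_sub, lp.infty_coeFn_mul, Pi.sub_apply, Pi.mul_apply]

lemma mem_center_of_forall_apply_mem_center [∀ i, NonUnitalNormedRing (B i)] {c : lp B ∞}
    (hc : ∀ i, c i ∈ Set.center (B i)) : c ∈ Set.center (lp B ∞) :=
  Semigroup.mem_center_iff.mpr fun b => lp.ext <| funext fun i => by
    simpa [lp.infty_coeFn_mul] using Semigroup.mem_center_iff.mp (hc i) (b i)

lemma norm_commutator_apply_le [∀ i, NonUnitalNormedRing (B i)] (x b : lp B ∞) (i : ι) :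
    ‖(x * b - b * x) i‖ ≤ 2 * ‖b‖ * ‖x i‖ := by
  have hb : ‖b i‖ ≤ ‖b‖ := lp.norm_apply_le_norm ENNReal.top_ne_zero b i
  rw [commutator_apply]
  calc ‖x i * b i - b i * x i‖ ≤ ‖x i‖ * ‖b i‖ + ‖b i‖ * ‖x i‖ :=
        (norm_sub_le _ _).trans (add_le_add (norm_mul_le _ _) (norm_mul_le _ _))
    _ ≤ 2 * ‖b‖ * ‖x i‖ := by nlinarith [norm_nonneg (x i)]

theorem exists_mem_center_norm_sub_apply_le [∀ i, CStarAlgebra (B i)]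
    [∀ i, FiniteDimensional ℂ (B i)] (a : lp B ∞) :
    ∃ c ∈ Set.center (lp B ∞), ∃ u : lp B ∞,
      ∀ i, ‖(a - c) i‖ ≤ ‖(a * u - u * a) i‖ := by
  choose c hc u hu hle using fun i =>
    CStarAlgebra.exists_mem_center_norm_sub_le_norm_commutator (a i)
  let U : lp B ∞ := ⟨u, memℓp_infty ⟨1, by
    rintro _ ⟨i, rfl⟩
    exact CStarRing.norm_le_one_of_mem_unitary (hu i)⟩⟩
  have hcU : ∀ i, ‖a i - c i‖ ≤ ‖(a * U - U * a) i‖ := fun i => by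
    rw [commutator_apply]
    exact hle i
  have hc_mem : Memℓp c ∞ := memℓp_infty ⟨‖a‖ + ‖a * U - U * a‖, by
    rintro _ ⟨i, rfl⟩
    calc ‖c i‖ = ‖a i - (a i - c i)‖ := by rw [sub_sub_cancel]
      _ ≤ ‖a i‖ + ‖a i - c i‖ := norm_sub_le _ _
      _ ≤ ‖a‖ + ‖a * U - U * a‖ :=
          add_le_add (lp.norm_apply_le_norm ENNReal.top_ne_zero a i)
            ((hcU i).trans (lp.norm_apply_le_norm ENNReal.top_ne_zero _ i))⟩
  exact ⟨⟨c, hc_mem⟩, mem_center_of_forall_apply_mem_center hc, U, hcU⟩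

end lp

theorem center_of_quotient_lifts_general (k : ℕ → ℕ)
    (J : Set (Set ℕ))
    (hJdown : ∀ X Y : Set ℕ, X ⊆ Y → Y ∈ J → X ∈ J) :
    {a : lp (fun n => Matrix (Fin (k n)) (Fin (k n)) ℂ) ∞ |
        ∀ b : lp (fun n => Matrix (Fin (k n)) (Fin (k n)) ℂ) ∞,
          ∀ ε : ℝ, 0 < ε → {n : ℕ | ε ≤ ‖(a * b - b * a) n‖} ∈ J} =
      {a : lp (fun n => Matrix (Fin (k n)) (Fin (k n)) ℂ) ∞ |
        ∃ c ∈ Set.center (lp (fun n => Matrix (Fin (k n)) (Fin (k n)) ℂ) ∞),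
          ∀ ε : ℝ, 0 < ε → {n : ℕ | ε ≤ ‖(a - c) n‖} ∈ J} := by
  have hJ : IsLowerSet J := fun _ _ hXY hY => hJdown _ _ hXY hY
  ext a
  constructor
  · intro ha
    obtain ⟨c, hc, u, hac⟩ := lp.exists_mem_center_norm_sub_apply_le a
    exact ⟨c, hc, VanishesAlong.of_norm_le_mul hJ (ha u) zero_le_one fun n => by
      simpa using hac n⟩
  · rintro ⟨c, hc, hac⟩ b
    have hab : a * b - b * a = (a - c) * b - b * (a - c) := by
      rw [sub_mul, mul_sub, Semigroup.mem_center_iff.mp hc b]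
      abel
    refine VanishesAlong.of_norm_le_mul (f := ⇑(a * b - b * a)) hJ hac (C := 2 * ‖b‖)
      (by positivity) fun n => ?_
    rw [hab]
    exact lp.norm_commutator_apply_le _ b n

/-- For `D = ∏_n M_{k(n)}(ℂ)` and the closed ideal `D^𝒥` associated with an
ideal `𝒥` on `ℕ`, the center of `D/D^𝒥` is the image of `Z(D)` under the quotient map:
an element of `D` is central modulo `D^𝒥` iff it differs from a central element of `D`
by an element of `D^𝒥`. -/
theorem center_of_quotient_lifts (k : ℕ → ℕ) [∀ n, NeZero (k n)]
    (J : Set (Set ℕ))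
    (hJdown : ∀ X Y : Set ℕ, X ⊆ Y → Y ∈ J → X ∈ J)
    (hJunion : ∀ X ∈ J, ∀ Y ∈ J, X ∪ Y ∈ J)
    (hJempty : (∅ : Set ℕ) ∈ J) :
    {a : lp (fun n => Matrix (Fin (k n)) (Fin (k n)) ℂ) ∞ |
        ∀ b : lp (fun n => Matrix (Fin (k n)) (Fin (k n)) ℂ) ∞,
          ∀ ε : ℝ, 0 < ε → {n : ℕ | ε ≤ ‖(a * b - b * a) n‖} ∈ J} =
      {a : lp (fun n => Matrix (Fin (k n)) (Fin (k n)) ℂ) ∞ |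
        ∃ c ∈ Set.center (lp (fun n => Matrix (Fin (k n)) (Fin (k n)) ℂ) ∞),
          ∀ ε : ℝ, 0 < ε → {n : ℕ | ε ≤ ‖(a - c) n‖} ∈ J} :=
  center_of_quotient_lifts_general k J hJdown
end

section
/- Let 𝒥 be a Borel ideal on ℕ containing all finite sets, let D = ∏_n M_{k(n)}(ℂ) and D^𝒥 the associated closed ideal, and let ℒ be a non-meager ideal on ℕ. If a ∈ D \ D^𝒥 then there exists M ∈ ℒ such that P_M a ∉ D^𝒥, where P_M a denotes the sequence (a_n) restricted to coordinates in M (zero elsewhere). -/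
open scoped Classical ENNReal Matrix.Norms.L2Operator

/-- The characteristic-function embedding of `𝒫(ℕ)` into `2^ℕ`. -/
noncomputable def charFun (A : Set ℕ) : ℕ → Bool := fun n => decide (n ∈ A)

/-!
Let `ε > 0` be such that `A = {n | ε ≤ ‖a n‖} ∉ 𝒥`. The trace `{X | X ∩ A ∈ 𝒥}` is again a Borel
ideal containing the finite sets, and it is proper. By Jalali-Naini–Talagrand it is meagre, so the
non-meagre `ℒ` has a member `M` outside it, i.e. `M ∩ A ∉ 𝒥`, and then `P_M a ∉ D^𝒥`.

Jalali-Naini–Talagrand: if a family `𝒦` closed under finite unions and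
containing the finite sets is non-meagre with the Baire property, it is comeagre in some basic
cylinder `C` fixing the coordinates in a finite set `I`. Flipping all coordinates outside `I` is a
homeomorphism preserving `C`, so some `X ∈ 𝒦` has its flip `X'` in `𝒦` too, and
`X ∪ X' ∪ I = ℕ` lies in `𝒦`.
-/

open Set Filter Topology

theorem mem_image_charFun {K : Set (Set ℕ)} {x : ℕ → Bool} :
    x ∈ charFun '' K ↔ {n | x n = true} ∈ K := by
  constructor
  · rintro ⟨X, hX, rfl⟩
    simpa [charFun] using hX
  · intro hx
    exact ⟨_, hx, funext fun n => by simp [charFun]⟩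

theorem exists_mem_and_apply_mem_of_residualEq {X : Type*} [TopologicalSpace X] [BaireSpace X]
    {S u V : Set X} (hSu : S =ᵇ u) (hV : IsOpen V) (hVne : V.Nonempty) (hVu : V ⊆ u)
    (h : X ≃ₜ X) (hhV : MapsTo h V u) : ∃ x ∈ S, h x ∈ S := by
  have hSu_h : ∀ᶠ x in residual X, S (h x) = u (h x) :=
    tendsto_residual_of_isOpenMap h.continuous h.isOpenMap |>.eventually hSu
  obtain ⟨x, ⟨hx, hhx⟩, hxV⟩ := (dense_of_mem_residual (hSu.and hSu_h)).exists_mem_open hV hVne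
  exact ⟨x, hx.mpr (hVu hxV), hhx.mpr (hhV hxV)⟩

section FlipOutside

variable {ι : Type*}

noncomputable def flipOutside (I : Set ι) : (ι → Bool) ≃ₜ (ι → Bool) :=
  have hinv : Function.Involutive fun (x : ι → Bool) n => if n ∈ I then x n else !x n :=
    fun x => funext fun n => by by_cases hn : n ∈ I <;> simp [hn]
  have hcont : Continuous fun (x : ι → Bool) n => if n ∈ I then x n else !x n :=
    continuous_pi fun n => (continuous_of_discreteTopology
      (f := fun b : Bool => if n ∈ I then b else !b)).comp (continuous_apply n)
  ⟨hinv.toPerm, hcont, hcont⟩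

theorem flipOutside_apply_of_mem {I : Set ι} (x : ι → Bool) {n : ι} (hn : n ∈ I) :
    flipOutside I x n = x n := if_pos hn

theorem flipOutside_apply_of_notMem {I : Set ι} (x : ι → Bool) {n : ι} (hn : n ∉ I) :
    flipOutside I x n = !x n := if_neg hn

theorem setOf_union_setOf_flipOutside_union (I : Set ι) (x : ι → Bool) :
    {n | x n = true} ∪ {n | flipOutside I x n = true} ∪ I = univ := by
  refine eq_univ_of_forall fun n => ?_
  by_cases hn : n ∈ I
  · exact Or.inr hn
  · cases hx : x n <;> simp [flipOutside_apply_of_notMem x hn, hx]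

end FlipOutside

theorem univ_mem_of_not_isMeagre_image_charFun {K : Set (Set ℕ)}
    (hunion : ∀ X ∈ K, ∀ Y ∈ K, X ∪ Y ∈ K) (hfin : ∀ X : Set ℕ, X.Finite → X ∈ K)
    (hK : BaireMeasurableSet (charFun '' K)) (hnm : ¬ IsMeagre (charFun '' K)) : univ ∈ K := by
  obtain ⟨u, hu, hKu⟩ := hK.residualEq_isOpen
  obtain ⟨x₀, hx₀⟩ : u.Nonempty := ((frequently_congr (hKu.mono fun _ => iff_of_eq)).mp hnm).exists
  obtain ⟨I, v, hv, hvu⟩ := isOpen_pi_iff.mp hu x₀ hx₀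
  set C : Set (ℕ → Bool) := (I : Set ℕ).pi fun n => {x₀ n}
  have hCu : C ⊆ u := fun x hx => hvu fun n hn => (hx n hn : x n = x₀ n) ▸ (hv n hn).2
  have hflipC : MapsTo (flipOutside I) C u := fun x hx =>
    hCu fun n hn => (flipOutside_apply_of_mem x hn).trans (hx n hn)
  obtain ⟨x, hx, hflipx⟩ := exists_mem_and_apply_mem_of_residualEq (V := C) hKu
    (isOpen_set_pi I.finite_toSet fun _ _ => isOpen_discrete _) ⟨x₀, fun _ _ => rfl⟩ hCu _ hflipC
  rw [mem_image_charFun] at hx hflipx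
  rw [← setOf_union_setOf_flipOutside_union I x]
  exact hunion _ (hunion _ hx _ hflipx) _ (hfin _ I.finite_toSet)

theorem baireMeasurableSet_image_charFun_inter (A : Set ℕ) {J : Set (Set ℕ)}
    (hJ : @MeasurableSet (ℕ → Bool) (borel (ℕ → Bool)) (charFun '' J)) :
    BaireMeasurableSet (charFun '' {X | X ∩ A ∈ J}) := by
  have hpre : charFun '' {X | X ∩ A ∈ J} = (fun x n => x n && charFun A n) ⁻¹' (charFun '' J) := by
    ext x
    simp only [mem_preimage, mem_image_charFun, Bool.and_eq_true, charFun, decide_eq_true_eq]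
    rfl
  borelize (ℕ → Bool)
  rw [hpre]
  refine (Continuous.measurable ?_ hJ).baireMeasurableSet
  exact continuous_pi fun n => (continuous_of_discreteTopology
    (f := fun b : Bool => b && charFun A n)).comp (continuous_apply n)

namespace lp

variable {α : Type*} {E : α → Type*} {p : ℝ≥0∞} [∀ i, NormedAddCommGroup (E i)]

/-- The coordinate projection `P_M`. -/
noncomputable def restrict (f : lp E p) (M : Set α) : lp E p :=
  ⟨fun i => if i ∈ M then f i else 0,
    (lp.memℓp f).mono' fun i => by
      split_ifs
      · exact le_rfl
      · exact _root_.norm_zero.trans_le (norm_nonneg _)⟩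

theorem restrict_apply_of_mem (f : lp E p) {M : Set α} {i : α} (hi : i ∈ M) :
    lp.restrict f M i = f i := if_pos hi

theorem restrict_apply_of_notMem (f : lp E p) {M : Set α} {i : α} (hi : i ∉ M) :
    lp.restrict f M i = 0 := if_neg hi

end lp

theorem exists_restriction_not_in_ideal_general (k : ℕ → ℕ)
    (J : Set (Set ℕ))
    (hJdown : ∀ X Y : Set ℕ, X ⊆ Y → Y ∈ J → X ∈ J)
    (hJunion : ∀ X ∈ J, ∀ Y ∈ J, X ∪ Y ∈ J)
    (hJfin : ∀ X : Set ℕ, X.Finite → X ∈ J)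
    (hJBorel : @MeasurableSet (ℕ → Bool) (borel (ℕ → Bool)) (charFun '' J))
    (L : Set (Set ℕ))
    (hLnonmeager : ¬ IsMeagre (charFun '' L))
    (a : lp (fun n => Matrix (Fin (k n)) (Fin (k n)) ℂ) ∞)
    (ha : ¬ ∀ ε : ℝ, 0 < ε → {n : ℕ | ε ≤ ‖a n‖} ∈ J) :
    ∃ M ∈ L, ∃ b : lp (fun n => Matrix (Fin (k n)) (Fin (k n)) ℂ) ∞,
      (∀ n ∈ M, b n = a n) ∧ (∀ n ∉ M, b n = 0) ∧
      ¬ ∀ ε : ℝ, 0 < ε → {n : ℕ | ε ≤ ‖b n‖} ∈ J := by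
  push Not at ha
  obtain ⟨ε, hε, hA⟩ := ha
  set A := {n : ℕ | ε ≤ ‖a n‖}
  have htrace_meagre : IsMeagre (charFun '' {X | X ∩ A ∈ J}) := by
    by_contra hnm
    refine hA ?_
    simpa using univ_mem_of_not_isMeagre_image_charFun (K := {X | X ∩ A ∈ J})
      (fun X hX Y hY => by rw [mem_ofPred_eq, union_inter_distrib_right]; exact hJunion _ hX _ hY)
      (fun X hX => hJfin _ (hX.inter_of_left A))
      (baireMeasurableSet_image_charFun_inter A hJBorel) hnm
  obtain ⟨M, hML, hMA⟩ : ∃ M ∈ L, M ∩ A ∉ J := by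
    by_contra! h
    exact hLnonmeager (htrace_meagre.mono (image_mono h))
  refine ⟨M, hML, lp.restrict a M, fun n => lp.restrict_apply_of_mem a,
    fun n => lp.restrict_apply_of_notMem a,
    fun h => hMA (hJdown _ _ ?_ (h ε hε))⟩
  rintro n ⟨hnM, hnA⟩
  rw [mem_ofPred_eq, lp.restrict_apply_of_mem a hnM]
  exact hnA

/-- Let `𝒥` be a Borel ideal on `ℕ` containing all finite sets, let
`D = ∏_n M_{k(n)}(ℂ)` with associated closed ideal `D^𝒥`, and let `ℒ` be a non-meager ideal
on `ℕ`. If `a ∈ D \ D^𝒥` then there is `M ∈ ℒ` such that the restriction `P_M a` of `a` to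
the coordinates in `M` is not in `D^𝒥`. -/
theorem exists_restriction_not_in_ideal (k : ℕ → ℕ) [∀ n, NeZero (k n)]
    (J : Set (Set ℕ))
    (hJdown : ∀ X Y : Set ℕ, X ⊆ Y → Y ∈ J → X ∈ J)
    (hJunion : ∀ X ∈ J, ∀ Y ∈ J, X ∪ Y ∈ J)
    (hJfin : ∀ X : Set ℕ, X.Finite → X ∈ J)
    (hJBorel : @MeasurableSet (ℕ → Bool) (borel (ℕ → Bool)) (charFun '' J))
    (L : Set (Set ℕ))
    (hLdown : ∀ X Y : Set ℕ, X ⊆ Y → Y ∈ L → X ∈ L)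
    (hLunion : ∀ X ∈ L, ∀ Y ∈ L, X ∪ Y ∈ L)
    (hLfin : ∀ X : Set ℕ, X.Finite → X ∈ L)
    (hLnonmeager : ¬ IsMeagre (charFun '' L))
    (a : lp (fun n => Matrix (Fin (k n)) (Fin (k n)) ℂ) ∞)
    (ha : ¬ ∀ ε : ℝ, 0 < ε → {n : ℕ | ε ≤ ‖a n‖} ∈ J) :
    ∃ M ∈ L, ∃ b : lp (fun n => Matrix (Fin (k n)) (Fin (k n)) ℂ) ∞,
      (∀ n ∈ M, b n = a n) ∧ (∀ n ∉ M, b n = 0) ∧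
      ¬ ∀ ε : ℝ, 0 < ε → {n : ℕ | ε ≤ ‖b n‖} ∈ J :=
  exists_restriction_not_in_ideal_general k J hJdown hJunion hJfin hJBorel L hLnonmeager a ha
end

section
/- A non-meager ideal ℒ on ℕ has the following property: for every partition (J_n) of ℕ into nonempty finite sets, there exists an infinite X ⊆ ℕ such that ⋃_{n∈X} J_n ∈ ℒ. -/
/-!
If no infinite `X` works, then every `A ∈ L` contains only finitely many of the blocks `Jp n`
(downward closure), so from some point on every block meets the complement of `A`. Hence
`charFun '' L` lies in `⋃ k, ⋂ n ≥ k, {f | f vanishes somewhere on Jp n}`. Each of these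
intersections is closed with dense complement: setting `f` to `true` on `Jp n` changes `f` only
on a block that, by disjointness, eventually avoids any given coordinate, so these modifications
converge to `f` as `n → ∞`. So `charFun '' L` would be meagre.
-/

open scoped Classical

section

open Filter Function Topology Set

variable {α : Type*} {J : ℕ → Finset α}

lemma eventually_notMem_of_pairwise_disjoint (hJ : Pairwise (Disjoint on J)) (a : α) :
    ∀ᶠ n in atTop, a ∉ J n := by
  rw [← Nat.cofinite_eq_atTop]
  exact Set.Finite.eventually_cofinite_notMem (s := {n | a ∈ J n}) <|
    Set.Subsingleton.finite fun m hm n hn =>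
      by_contra fun hmn => Finset.disjoint_left.mp (hJ hmn) hm hn

lemma tendsto_piecewise_true (hJ : ∀ a, ∀ᶠ n in atTop, a ∉ J n) (f : α → Bool) :
    Tendsto (fun n => (J n : Set α).piecewise (fun _ => true) f) atTop (𝓝 f) :=
  tendsto_pi_nhds.mpr fun a =>
    tendsto_const_nhds.congr' <| (hJ a).mono fun _ hn => (piecewise_eq_of_notMem _ _ _ hn).symm

lemma isOpen_setOf_forall_mem_eq_true (s : Finset α) :
    IsOpen {f : α → Bool | ∀ m ∈ s, f m = true} := by
  simpa [Set.pi] using isOpen_set_pi s.finite_toSet fun _ _ => isOpen_discrete ({true} : Set Bool)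

lemma dense_iUnion_setOf_forall_mem_eq_true (hJ : ∀ a, ∀ᶠ n in atTop, a ∉ J n) (k : ℕ) :
    Dense (⋃ n ∈ Ici k, {f : α → Bool | ∀ m ∈ J n, f m = true}) := fun f =>
  mem_closure_of_tendsto (tendsto_piecewise_true hJ f) <|
    (eventually_ge_atTop k).mono fun _ hn =>
      mem_biUnion hn fun _ hm => piecewise_eq_of_mem _ _ _ (Finset.mem_coe.mpr hm)

lemma isMeagre_setOf_eventually_exists_eq_false (hJ : ∀ a, ∀ᶠ n in atTop, a ∉ J n) :
    IsMeagre {f : α → Bool | ∀ᶠ n in atTop, ∃ m ∈ J n, f m = false} := by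
  have hE : {f : α → Bool | ∀ᶠ n in atTop, ∃ m ∈ J n, f m = false} =
      ⋃ k, (⋃ n ∈ Ici k, {f : α → Bool | ∀ m ∈ J n, f m = true})ᶜ := by
    ext f
    simp [eventually_atTop, not_forall]
  rw [hE]
  refine isMeagre_iUnion fun k => IsNowhereDense.isMeagre ?_
  have hopen := isOpen_biUnion fun n (_ : n ∈ Ici k) => isOpen_setOf_forall_mem_eq_true (J n)
  rw [hopen.isClosed_compl.isNowhereDense_iff, interior_eq_empty_iff_dense_compl, compl_compl]
  exact dense_iUnion_setOf_forall_mem_eq_true hJ k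

end

theorem nonmeager_ideal_partition_property_general
    (L : Set (Set ℕ))
    (hdown : ∀ X Y : Set ℕ, X ⊆ Y → Y ∈ L → X ∈ L)
    (hnonmeager : ¬ IsMeagre (charFun '' L))
    (Jp : ℕ → Finset ℕ)
    (hdisj : ∀ m n, m ≠ n → Disjoint (Jp m) (Jp n)) :
    ∃ X : Set ℕ, X.Infinite ∧ (⋃ n ∈ X, (Jp n : Set ℕ)) ∈ L := by
  by_contra! hcon
  refine hnonmeager <| (isMeagre_setOf_eventually_exists_eq_false
    (eventually_notMem_of_pairwise_disjoint hdisj)).mono ?_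
  rintro _ ⟨A, hA, rfl⟩
  have hfin : {n | (Jp n : Set ℕ) ⊆ A}.Finite := by
    by_contra hinf
    exact hcon _ hinf (hdown _ A (Set.iUnion₂_subset fun n hn => hn) hA)
  rw [← Nat.cofinite_eq_atTop]
  filter_upwards [hfin.eventually_cofinite_notMem] with n hn
  obtain ⟨m, hm, hmA⟩ := Set.not_subset.mp hn
  exact ⟨m, hm, by simpa [charFun] using hmA⟩

/-- one direction of Jalali-Naini–Talagrand. A non-meager ideal `ℒ` on `ℕ`
has the property that for every partition of `ℕ` into nonempty finite sets `(J_n)` there is an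
infinite `X ⊆ ℕ` with `⋃_{n ∈ X} J_n ∈ ℒ`. -/
theorem nonmeager_ideal_partition_property
    (L : Set (Set ℕ))
    (hdown : ∀ X Y : Set ℕ, X ⊆ Y → Y ∈ L → X ∈ L)
    (hunion : ∀ X ∈ L, ∀ Y ∈ L, X ∪ Y ∈ L)
    (hfin : ∀ X : Set ℕ, X.Finite → X ∈ L)
    (hnonmeager : ¬ IsMeagre (charFun '' L))
    (Jp : ℕ → Finset ℕ)
    (hne : ∀ n, (Jp n).Nonempty)
    (hdisj : ∀ m n, m ≠ n → Disjoint (Jp m) (Jp n))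
    (hcover : (⋃ n, (Jp n : Set ℕ)) = Set.univ) :
    ∃ X : Set ℕ, X.Infinite ∧ (⋃ n ∈ X, (Jp n : Set ℕ)) ∈ L :=
  nonmeager_ideal_partition_property_general L hdown hnonmeager Jp hdisj
end
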